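/- arXiv:1604.03579 — 4 statements merged into one kernel-verified Lean document; each statement's English description precedes it below -/
import Mathlib

section
/- Let y be a twice-differentiable real function of x with y ≠ 0 satisfying the Painlevé III equation with β = δ = 0, i.e. y'' = (y')²/y − y'/x + α y²/x + γ y³ (for x > 0). Then the function I(x) = x²(y'/y)² + 2x·y'/y − 2αxy − γx²y² is constant, i.e. its derivative with respect to x vanishes. -/
/-!
With `w = x y'/y`, the equation says exactly that `w' = α y + γ x y²`, and
`I = w² + 2w − 2αxy − γx²y²`. Then `I' = 2(w + 1)(αy + γxy²) − 2α(xy)' − γ(x²y²)'`, which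
vanishes because `(w + 1) y = (xy)'` and `(w + 1) x y² = (x²y²)' / 2`.
-/

section

variable {α γ x : ℝ} {y y' : ℝ → ℝ}

theorem hasDerivAt_mul_div_of_painleveIII (hx : x ≠ 0) (hyx : y x ≠ 0)
    (h1 : HasDerivAt y (y' x) x)
    (h2 : HasDerivAt y' ((y' x)^2 / y x - y' x / x + α * (y x)^2 / x + γ * (y x)^3) x) :
    HasDerivAt (fun t => t * (y' t / y t)) (α * y x + γ * x * (y x)^2) x := by
  refine ((hasDerivAt_id' x).fun_mul (h2.fun_div h1 hyx)).congr_deriv ?_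
  field_simp
  ring

end

/-- Painlevé III with β = δ = 0: the quantity
`I(x) = x²(y'/y)² + 2x·y'/y − 2αxy − γx²y²` is a first integral. -/
theorem painleveIII_first_integral (α γ : ℝ) (y y' : ℝ → ℝ)
    (hy : ∀ x ∈ Set.Ioi (0:ℝ), y x ≠ 0)
    (hd1 : ∀ x ∈ Set.Ioi (0:ℝ), HasDerivAt y (y' x) x)
    (hd2 : ∀ x ∈ Set.Ioi (0:ℝ), HasDerivAt y'
      ((y' x)^2 / y x - y' x / x + α * (y x)^2 / x + γ * (y x)^3) x) :
    ∀ x ∈ Set.Ioi (0:ℝ), HasDerivAt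
      (fun x => x^2 * (y' x / y x)^2 + 2 * x * (y' x / y x)
        - 2 * α * x * y x - γ * x^2 * (y x)^2) 0 x := by
  intro x hx
  have hw := hasDerivAt_mul_div_of_painleveIII hx.ne' (hy x hx) (hd1 x hx) (hd2 x hx)
  have hxy : HasDerivAt (fun t => t * y t) (y x + x * y' x) x :=
    ((hasDerivAt_id' x).fun_mul (hd1 x hx)).congr_deriv (by ring)
  have hI := (((hw.fun_pow 2).fun_add (hw.const_mul 2)).fun_sub (hxy.const_mul (2 * α))).fun_sub
    ((hxy.fun_pow 2).const_mul γ)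
  refine (hI.congr_deriv ?_).congr_of_eventuallyEq (.of_forall fun t => by ring)
  have hyx := hy x hx
  simp only [Nat.cast_ofNat, Nat.add_one_sub_one, pow_one]
  field_simp
  ring
end

section
/- Let y be a twice-differentiable real function of x with y ∉ {0, 1} and x > 0 satisfying the Painlevé V equation with γ = δ = 0, i.e. y'' = (1/(2y) + 1/(y−1))(y')² − y'/x + (y−1)²(αy + β/y)/x². Then I(x) = (1/y)·(x y'/(y−1))² + 2β/y − 2αy is constant in x. -/
/-!
Along any curve `t ↦ (y t, p t)` with `y' = p`, the derivative of `I` factors as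
`2x²p / (y(y−1)²) · (p' − F)`, where `y'' = F(x, y, y')` is the Painlevé V equation;
so `I` is constant along solutions.
-/

namespace PainleveV

noncomputable def rhs (α β x y p : ℝ) : ℝ :=
  (1 / (2 * y) + 1 / (y - 1)) * p ^ 2 - p / x + (y - 1) ^ 2 * (α * y + β / y) / x ^ 2

noncomputable def firstIntegral (α β x y p : ℝ) : ℝ :=
  1 / y * (x * p / (y - 1)) ^ 2 + 2 * β / y - 2 * α * y

theorem hasDerivAt_firstIntegral (α β : ℝ) {y p : ℝ → ℝ} {x q : ℝ}
    (hy : HasDerivAt y (p x) x) (hp : HasDerivAt p q x)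
    (hx : x ≠ 0) (hy0 : y x ≠ 0) (hy1 : y x ≠ 1) :
    HasDerivAt (fun t => firstIntegral α β t (y t) (p t))
      (2 * x ^ 2 * p x / (y x * (y x - 1) ^ 2) * (q - rhs α β x (y x) (p x))) x := by
  have hy1' : y x - 1 ≠ 0 := sub_ne_zero.mpr hy1
  have hu : HasDerivAt (fun t => t * p t / (y t - 1)) _ x :=
    ((hasDerivAt_id x).mul hp).div (hy.sub_const 1) hy1'
  have hI := ((((hasDerivAt_const x (1 : ℝ)).div hy hy0).mul (hu.pow 2)).add
    ((hasDerivAt_const x (2 * β)).div hy hy0)).sub (hy.const_mul (2 * α))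
  refine hI.congr_deriv ?_
  norm_num only [rhs, id, Pi.div_apply, Pi.mul_apply, Pi.pow_apply]
  field_simp
  ring

end PainleveV

open PainleveV in
/-- Painlevé V with γ = δ = 0: the quantity
`I(x) = (1/y)(xy'/(y−1))² + 2β/y − 2αy` is a first integral. -/
theorem painleveV_first_integral (α β : ℝ) (y y' : ℝ → ℝ)
    (hy0 : ∀ x ∈ Set.Ioi (0:ℝ), y x ≠ 0)
    (hy1 : ∀ x ∈ Set.Ioi (0:ℝ), y x ≠ 1)
    (hd1 : ∀ x ∈ Set.Ioi (0:ℝ), HasDerivAt y (y' x) x)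
    (hd2 : ∀ x ∈ Set.Ioi (0:ℝ), HasDerivAt y'
      ((1/(2 * y x) + 1/(y x - 1)) * (y' x)^2 - y' x / x
        + (y x - 1)^2 * (α * y x + β / y x) / x^2) x) :
    ∀ x ∈ Set.Ioi (0:ℝ), HasDerivAt
      (fun x => (1 / y x) * (x * y' x / (y x - 1))^2 + 2 * β / y x - 2 * α * y x) 0 x := by
  intro x hx
  simpa [firstIntegral, rhs] using
    hasDerivAt_firstIntegral α β (hd1 x hx) (hd2 x hx) hx.ne' (hy0 x hx) (hy1 x hx)
end

section
/- Let y be a twice-differentiable function satisfying y'' = (1 + (y')²)/(2y) on an interval, with y > 0. Then I₁(x) = (1 + (y'(x))²)/y(x) is constant. -/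
theorem hasDerivAt_one_add_sq_div {y y' : ℝ → ℝ} {x y'' : ℝ} (hy : y x ≠ 0)
    (hd1 : HasDerivAt y (y' x) x) (hd2 : HasDerivAt y' y'' x) :
    HasDerivAt (fun t => (1 + y' t ^ 2) / y t)
      (y' x * (2 * y x * y'' - (1 + y' x ^ 2)) / y x ^ 2) x := by
  have hnum : HasDerivAt (fun t => 1 + y' t ^ 2) (2 * y' x * y'') x := by
    simpa using (hd2.pow 2).const_add 1
  exact (hnum.div hd1 hy).congr_deriv (by ring)

theorem inceXXXII_first_integral_one_general (S : Set ℝ)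
    (y y' : ℝ → ℝ) (hy : ∀ x ∈ S, 0 < y x)
    (hd1 : ∀ x ∈ S, HasDerivAt y (y' x) x)
    (hd2 : ∀ x ∈ S, HasDerivAt y' ((1 + (y' x)^2) / (2 * y x)) x) :
    ∀ x ∈ S, HasDerivAt (fun x => (1 + (y' x)^2) / y x) 0 x := by
  intro x hx
  have hyx : y x ≠ 0 := (hy x hx).ne'
  have hode : 2 * y x * ((1 + y' x ^ 2) / (2 * y x)) - (1 + y' x ^ 2) = 0 := by
    field_simp
    ring
  simpa [hode] using hasDerivAt_one_add_sq_div hyx (hd1 x hx) (hd2 x hx)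

/-- For `y'' = (1 + (y')²)/(2y)` (Ince XXXII), `I₁ = (1 + (y')²)/y`
is a first integral. -/
theorem inceXXXII_first_integral_one (S : Set ℝ) (hS : IsOpen S)
    (y y' : ℝ → ℝ) (hy : ∀ x ∈ S, 0 < y x)
    (hd1 : ∀ x ∈ S, HasDerivAt y (y' x) x)
    (hd2 : ∀ x ∈ S, HasDerivAt y' ((1 + (y' x)^2) / (2 * y x)) x) :
    ∀ x ∈ S, HasDerivAt (fun x => (1 + (y' x)^2) / y x) 0 x :=
  inceXXXII_first_integral_one_general S y y' hy hd1 hd2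
end

section
/- Let y be a twice-differentiable function satisfying y'' = (1 + (y')²)/(2y) on an interval, with y > 0. Then I₂(x) = 2y'(x) − (x/y(x))(1 + (y'(x))²) is constant. -/
/-!
Along any curve, the derivative of `I₂ = 2y' − (x/y)(1 + y'²)` factors as
`(2 − 2xy'/y) · (y'' − (1 + y'²)/(2y))`, a multiple of the residual of Ince's equation XXXII;
it therefore vanishes along solutions.
-/

theorem hasDerivAt_inceXXXII_integral {y y' : ℝ → ℝ} {x y'' : ℝ}
    (hy : y x ≠ 0) (hd1 : HasDerivAt y (y' x) x) (hd2 : HasDerivAt y' y'' x) :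
    HasDerivAt (fun t => 2 * y' t - (t / y t) * (1 + (y' t)^2))
      ((2 - 2 * x * y' x / y x) * (y'' - (1 + (y' x)^2) / (2 * y x))) x := by
  have hratio : HasDerivAt (fun t => t / y t) ((1 * y x - x * y' x) / (y x)^2) x :=
    (hasDerivAt_id x).div hd1 hy
  have hsq : HasDerivAt (fun t => 1 + (y' t)^2) (2 * y' x * y'') x := by
    simpa using (hd2.fun_pow 2).const_add 1
  refine ((hd2.const_mul 2).fun_sub (hratio.fun_mul hsq)).congr_deriv ?_
  field_simp
  ring

theorem inceXXXII_first_integral_two_general (S : Set ℝ)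
    (y y' : ℝ → ℝ) (hy : ∀ x ∈ S, 0 < y x)
    (hd1 : ∀ x ∈ S, HasDerivAt y (y' x) x)
    (hd2 : ∀ x ∈ S, HasDerivAt y' ((1 + (y' x)^2) / (2 * y x)) x) :
    ∀ x ∈ S, HasDerivAt (fun x => 2 * y' x - (x / y x) * (1 + (y' x)^2)) 0 x := by
  intro x hx
  simpa using hasDerivAt_inceXXXII_integral (hy x hx).ne' (hd1 x hx) (hd2 x hx)

/-- For `y'' = (1 + (y')²)/(2y)` (Ince XXXII), `I₂ = 2y' − (x/y)(1 + (y')²)`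
is a first integral. -/
theorem inceXXXII_first_integral_two (S : Set ℝ) (hS : IsOpen S)
    (y y' : ℝ → ℝ) (hy : ∀ x ∈ S, 0 < y x)
    (hd1 : ∀ x ∈ S, HasDerivAt y (y' x) x)
    (hd2 : ∀ x ∈ S, HasDerivAt y' ((1 + (y' x)^2) / (2 * y x)) x) :
    ∀ x ∈ S, HasDerivAt (fun x => 2 * y' x - (x / y x) * (1 + (y' x)^2)) 0 x :=
  inceXXXII_first_integral_two_general S y y' hy hd1 hd2
end
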